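/- Let f ∈ G_s(Z). Then the norm closure of dom M_f equals the norm closure of Pr_X(dom f), and the norm closure of Im M_f equals the norm closure of Pr_{X*}(dom f). In particular, the norm closures of dom M_f and of Im M_f are convex sets. -/

import Mathlib

/-! The argument is of Brøndsted–Rockafellar type. If `f z ≤ c z + s²`, separating the epigraph
of `f` from an open box of half-widths `θ s` and `s / θ` by Hahn–Banach, and testing the
separating functional against `f* ≥ c`, gives a point `z + w` of the box with
`f (z + w) ≤ c z + ⟨w₁, z₂⟩ + ⟨z₁, w₂⟩ + 3 s² / 25`; at the midpoint `z + w / 2` the gap `f - c`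
is then at most `(9 s / 10)²`. Iterating yields a Cauchy sequence whose limit lies in `M_f` by
lower semicontinuity, within `5 θ s` of `z₁` and `5 s / θ` of `z₂`. Letting `θ → 0` and `θ → ∞`
puts both projections of `dom f` in the closures of those of `M_f`, and `dom f` is convex. -/

open NormedSpace

noncomputable section

/-- The coupling `c(x, x*) := ⟨x, x*⟩` on `Z := X × X*`. -/
def coup (X : Type*) [NormedAddCommGroup X] [NormedSpace ℝ X]
    (z : X × StrongDual ℝ X) : ℝ := z.2 z.1

/-- The coupling `c(u*, u**) := ⟨u*, u**⟩` on `Z* := X* × X**`. -/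
def coupS (X : Type*) [NormedAddCommGroup X] [NormedSpace ℝ X]
    (p : StrongDual ℝ X × StrongDual ℝ (StrongDual ℝ X)) : ℝ := p.2 p.1

/-- The Fenchel conjugate `f* : X* × X** → ℝ ∪ {±∞}` of `f : Z → ℝ ∪ {+∞}`. -/
def conjF (X : Type*) [NormedAddCommGroup X] [NormedSpace ℝ X]
    (f : X × StrongDual ℝ X → EReal) (p : StrongDual ℝ X × StrongDual ℝ (StrongDual ℝ X)) : EReal :=
  ⨆ z : X × StrongDual ℝ X, (((p.1 z.1 + p.2 z.2 : ℝ) : EReal) - f z)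

/-- `M_f := {z | f z = c z}`. -/
def Mset (X : Type*) [NormedAddCommGroup X] [NormedSpace ℝ X]
    (f : X × StrongDual ℝ X → EReal) : Set (X × StrongDual ℝ X) :=
  {z | f z = ((coup X z : ℝ) : EReal)}

open Filter Topology Metric

theorem StrongDual.mul_norm_le_of_forall_norm_lt_le {E : Type*} [NormedAddCommGroup E]
    [NormedSpace ℝ E] (g : StrongDual ℝ E) {r K : ℝ} (hr : 0 < r)
    (h : ∀ x, ‖x‖ < r → g x ≤ K) : r * ‖g‖ ≤ K := by
  by_contra! hlt
  obtain ⟨x, hx, hgx⟩ := g.exists_lt_apply_of_lt_opNorm ((div_lt_iff₀' hr).2 hlt)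
  have hrx : ∀ y, ‖y‖ = ‖x‖ → r * g y ≤ K := fun y hy => by
    simpa using h (r • y) (by rw [norm_smul, Real.norm_of_nonneg hr.le, hy]; nlinarith)
  rw [Real.norm_eq_abs, lt_abs, div_lt_iff₀' hr, div_lt_iff₀' hr] at hgx
  rcases hgx with hgx | hgx
  · linarith [hrx x rfl]
  · have := hrx (-x) (norm_neg x)
    rw [map_neg] at this
    linarith

theorem StrongDual.mul_norm_comp_inl_add_mul_norm_comp_inr_le {E F : Type*}
    [NormedAddCommGroup E] [NormedSpace ℝ E] [NormedAddCommGroup F] [NormedSpace ℝ F]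
    (g : StrongDual ℝ (E × F)) {r s K : ℝ} (hr : 0 < r) (hs : 0 < s)
    (h : ∀ x y, ‖x‖ < r → ‖y‖ < s → g (x, y) ≤ K) :
    r * ‖g.comp (.inl ℝ E F)‖ + s * ‖g.comp (.inr ℝ E F)‖ ≤ K := by
  have hx : ∀ x, ‖x‖ < r → g.comp (.inl ℝ E F) x ≤ K - s * ‖g.comp (.inr ℝ E F)‖ := by
    intro x hx
    have := StrongDual.mul_norm_le_of_forall_norm_lt_le (g.comp (.inr ℝ E F)) hs
      (K := K - g.comp (.inl ℝ E F) x) fun y hy => by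
        have := h x y hx hy
        rw [← g.comp_inl_add_comp_inr] at this
        simp only at this
        linarith
    linarith
  linarith [StrongDual.mul_norm_le_of_forall_norm_lt_le _ hr hx]

theorem EReal.coe_le_of_forall_le_coe {x : EReal} {r : ℝ} (h : ∀ t : ℝ, x ≤ t → r ≤ t) :
    (r : EReal) ≤ x := by
  by_contra! hx
  obtain ⟨t, hxt, htr⟩ := EReal.lt_iff_exists_real_btwn.1 hx
  exact (EReal.coe_lt_coe_iff.1 htr).not_ge (h t hxt.le)

theorem exists_tendsto_dist_le_of_le_geometric {α : Type*} [PseudoMetricSpace α]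
    [CompleteSpace α] {r C : ℝ} (hr : r < 1) {u : ℕ → α}
    (hu : ∀ n, dist (u n) (u (n + 1)) ≤ C * r ^ n) :
    ∃ a, Tendsto u atTop (𝓝 a) ∧ dist (u 0) a ≤ C / (1 - r) := by
  obtain ⟨a, ha⟩ := cauchySeq_tendsto_of_complete (cauchySeq_of_le_geometric r C hr hu)
  exact ⟨a, ha, dist_le_of_le_geometric_of_tendsto₀ r C hr hu ha⟩

section

variable {X : Type*} [NormedAddCommGroup X] [NormedSpace ℝ X] {f : X × StrongDual ℝ X → EReal}

theorem coup_add (z w : X × StrongDual ℝ X) :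
    coup X (z + w) = coup X z + z.2 w.1 + w.2 z.1 + coup X w := by
  simp only [coup, Prod.fst_add, Prod.snd_add, map_add, add_apply]
  ring

theorem le_combo_of_convex_epigraph
    (hconv : Convex ℝ {p : (X × StrongDual ℝ X) × ℝ | f p.1 ≤ (p.2 : EReal)})
    {z w : X × StrongDual ℝ X} {s t a b : ℝ} (hz : f z ≤ s) (hw : f w ≤ t)
    (ha : 0 ≤ a) (hb : 0 ≤ b) (hab : a + b = 1) :
    f (a • z + b • w) ≤ ((a * s + b * t : ℝ) : EReal) :=
  hconv (x := (z, s)) (y := (w, t)) hz hw ha hb hab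

theorem convex_dom_of_convex_epigraph
    (hconv : Convex ℝ {p : (X × StrongDual ℝ X) × ℝ | f p.1 ≤ (p.2 : EReal)}) :
    Convex ℝ {z | f z ≠ ⊤} := by
  intro z hz w hw a b ha hb hab
  obtain ⟨s, hzs, -⟩ := EReal.lt_iff_exists_real_btwn.1 (lt_top_iff_ne_top.2 hz)
  obtain ⟨t, hwt, -⟩ := EReal.lt_iff_exists_real_btwn.1 (lt_top_iff_ne_top.2 hw)
  exact ne_top_of_le_ne_top (EReal.coe_ne_top _)
    (le_combo_of_convex_epigraph hconv hzs.le hwt.le ha hb hab)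

theorem coupS_le_of_forall_le
    (hgeS : ∀ p, ((coupS X p : ℝ) : EReal) ≤ conjF X f p)
    {p : StrongDual ℝ X × StrongDual ℝ (StrongDual ℝ X)} {K : ℝ}
    (h : ∀ ζ, ((p.1 ζ.1 + p.2 ζ.2 - K : ℝ) : EReal) ≤ f ζ) : coupS X p ≤ K := by
  refine EReal.coe_le_coe_iff.1 ((hgeS p).trans (iSup_le fun ζ => ?_))
  refine EReal.sub_le_of_le_add ?_
  rw [← sub_add_cancel (p.1 ζ.1 + p.2 ζ.2) K, EReal.coe_add, add_comm]
  gcongr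
  exact h ζ

theorem coupS_le_of_forall_le_add
    (hgeS : ∀ p, ((coupS X p : ℝ) : EReal) ≤ conjF X f p) (z : X × StrongDual ℝ X)
    {p : StrongDual ℝ X × StrongDual ℝ (StrongDual ℝ X)} {m : ℝ}
    (h : ∀ w, ((coup X z + z.2 w.1 + w.2 z.1 + p.1 w.1 + p.2 w.2 + m : ℝ) : EReal) ≤ f (z + w)) :
    coupS X p ≤ -m := by
  have := coupS_le_of_forall_le hgeS (p := (p.1 + z.2, p.2 + inclusionInDoubleDual ℝ X z.1))
    (K := coup X z + p.1 z.1 + p.2 z.2 - m) fun ζ => by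
      convert h (ζ - z) using 2
      · simp only [coup, Prod.fst_sub, Prod.snd_sub, map_sub, add_apply,
          sub_apply, dual_def]
        ring
      · abel
  simp only [coupS, map_add, add_apply, dual_def] at this ⊢
  simp only [coup] at this
  linarith

theorem exists_norm_lt_le_coup_add
    (hconv : Convex ℝ {p : (X × StrongDual ℝ X) × ℝ | f p.1 ≤ (p.2 : EReal)})
    (hgeS : ∀ p, ((coupS X p : ℝ) : EReal) ≤ conjF X f p)
    {z : X × StrongDual ℝ X} {u lam eps δ : ℝ} (hz : f z ≤ ((coup X z + u : ℝ) : EReal))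
    (hlam : 0 < lam) (heps : 0 < eps) (hδ : 0 < δ) (hu : u ≤ lam * eps) :
    ∃ w : X × StrongDual ℝ X, ‖w.1‖ < lam ∧ ‖w.2‖ < eps ∧
      f (z + w) ≤ ((coup X z + z.2 w.1 + w.2 z.1 + δ : ℝ) : EReal) := by
  by_contra! hfar
  set E := {p : (X × StrongDual ℝ X) × ℝ |
    f (z + p.1) ≤ ((coup X z + z.2 p.1.1 + p.1.2 z.1 + p.2 : ℝ) : EReal)}
  set O := (ball (0 : X) lam ×ˢ ball (0 : StrongDual ℝ X) eps) ×ˢ Set.Iio δ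
  have hE : Convex ℝ E := by
    intro p hp p' hp' a b ha hb hab
    show f (z + (a • p + b • p').1) ≤ _
    convert le_combo_of_convex_epigraph hconv hp hp' ha hb hab using 2
    · rw [smul_add, smul_add, add_add_add_comm, ← add_smul, hab, one_smul]
      rfl
    · simp only [Prod.fst_add, Prod.snd_add, Prod.smul_fst, Prod.smul_snd, map_add, map_smul,
        add_apply, smul_apply, smul_eq_mul]
      linear_combination (coup X z) * hab.symm
  have hO : Convex ℝ O := ((convex_ball _ _).prod (convex_ball _ _)).prod (convex_Iio _)
  have hOopen : IsOpen O := (isOpen_ball.prod isOpen_ball).prod isOpen_Iio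
  have hdisj : Disjoint O E := by
    refine Set.disjoint_left.2 fun ⟨w, t⟩ ⟨⟨hw1, hw2⟩, ht⟩ hwt => ?_
    refine (hfar w (mem_ball_zero_iff.1 hw1) (mem_ball_zero_iff.1 hw2)).not_ge (hwt.trans ?_)
    exact EReal.coe_le_coe_iff.2 (by simp only [Set.mem_Iio] at ht; linarith)
  obtain ⟨φ, s, hφO, hφE⟩ := geometric_hahn_banach_open hO hOopen hE hdisj
  set q := φ.comp (.inl ℝ (X × StrongDual ℝ X) ℝ)
  set σ := φ (0, 1)
  have hφ : ∀ w t, φ (w, t) = q w + σ * t := fun w t => by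
    rw [← φ.comp_inl_add_comp_inr, mul_comm, ← smul_eq_mul, ← map_smul]
    simp [q]
  have h0E : ((0 : X × StrongDual ℝ X), u) ∈ E := by simpa [E] using hz
  have hsu : s ≤ σ * u := by simpa [hφ] using hφE _ h0E
  have hσ : 0 < σ := by
    by_contra! hσ
    have := hφO ((0 : X × StrongDual ℝ X), min u δ - 1)
      ⟨⟨mem_ball_self hlam, mem_ball_self heps⟩,
        show min u δ - 1 < δ by linarith [min_le_right u δ]⟩
    rw [hφ, map_zero, zero_add] at this
    nlinarith [min_le_left u δ]
  set m := s / σ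
  set Q : StrongDual ℝ (X × StrongDual ℝ X) := -σ⁻¹ • q
  have hs : s = σ * m := (mul_div_cancel₀ s hσ.ne').symm
  have hq : ∀ w, q w = σ * -Q w := fun w => by
    simp only [Q, smul_apply, smul_eq_mul]
    field_simp
  have hbox : ∀ x y, ‖x‖ < lam → ‖y‖ < eps → Q (x, y) ≤ m - δ / 2 := fun x y hx hy => by
    have := hφO ((-x, -y), δ / 2) (by simp [O, hx, hy, hδ])
    rw [hφ, hq, hs, ← Prod.neg_mk, map_neg, neg_neg] at this
    have := (mul_lt_mul_iff_of_pos_left hσ).1 (by linarith : σ * (Q (x, y) + δ / 2) < σ * m)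
    linarith
  have hE_le : ∀ w t, (w, t) ∈ E → m + Q w ≤ t := fun w t hwt => by
    have := hφE _ hwt
    rw [hφ, hq, hs] at this
    have := (mul_le_mul_iff_of_pos_left hσ).1 (by linarith : σ * m ≤ σ * (t - Q w))
    linarith
  have hmu : m ≤ u := by simpa using hE_le _ _ h0E
  let Q₁ : StrongDual ℝ X := Q.comp (.inl ℝ X (StrongDual ℝ X))
  let Q₂ : StrongDual ℝ (StrongDual ℝ X) := Q.comp (.inr ℝ X (StrongDual ℝ X))
  have hnorm : lam * ‖Q₁‖ + eps * ‖Q₂‖ ≤ m - δ / 2 :=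
    StrongDual.mul_norm_comp_inl_add_mul_norm_comp_inr_le Q hlam heps hbox
  have hminorant : ∀ w, ((coup X z + z.2 w.1 + w.2 z.1 + Q₁ w.1 + Q₂ w.2 + m : ℝ) : EReal) ≤
      f (z + w) := fun w => EReal.coe_le_of_forall_le_coe fun t ht => by
    have := hE_le w (t - (coup X z + z.2 w.1 + w.2 z.1)) (by
      show f (z + w) ≤ ((_ : ℝ) : EReal)
      convert ht using 2
      ring)
    rw [← Q.comp_inl_add_comp_inr] at this
    linarith
  have hQQ : Q₂ Q₁ ≤ -m := coupS_le_of_forall_le_add hgeS z (p := (Q₁, Q₂)) hminorant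
  have hQQ' : -(‖Q₂‖ * ‖Q₁‖) ≤ Q₂ Q₁ := neg_le_of_abs_le (Q₂.le_opNorm Q₁)
  -- With `a = ‖Q₁‖`, `b = ‖Q₂‖`: `lam a + eps b + δ / 2 ≤ m ≤ a b ≤ eps b`, as `a ≤ eps`.
  have hQ₁ : ‖Q₁‖ ≤ eps := le_of_mul_le_mul_left
    (by linarith [mul_nonneg heps.le (norm_nonneg Q₂)] : lam * ‖Q₁‖ ≤ lam * eps) hlam
  linarith [mul_le_mul_of_nonneg_right hQ₁ (norm_nonneg Q₂), mul_nonneg hlam.le (norm_nonneg Q₁)]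

theorem exists_nearby_le_coup_add_sq
    (hconv : Convex ℝ {p : (X × StrongDual ℝ X) × ℝ | f p.1 ≤ (p.2 : EReal)})
    (hgeS : ∀ p, ((coupS X p : ℝ) : EReal) ≤ conjF X f p)
    {θ s : ℝ} (hθ : 0 < θ) (hs : 0 < s) {z : X × StrongDual ℝ X}
    (hz : f z ≤ ((coup X z + s ^ 2 : ℝ) : EReal)) :
    ∃ z' : X × StrongDual ℝ X, f z' ≤ ((coup X z' + (9 / 10 * s) ^ 2 : ℝ) : EReal) ∧
      ‖z'.1 - z.1‖ ≤ θ * s / 2 ∧ ‖z'.2 - z.2‖ ≤ s / θ / 2 := by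
  -- With `δ = 3 s² / 25` the gap at the midpoint `z + w / 2` is at most
  -- `s² / 2 + δ / 2 - ⟨w₁, w₂⟩ / 4 ≤ s² / 2 + δ / 2 + s² / 4 = (9 s / 10)²`.
  obtain ⟨w, hw₁, hw₂, hw⟩ := exists_norm_lt_le_coup_add hconv hgeS hz
    (lam := θ * s) (eps := s / θ) (δ := 3 / 25 * s ^ 2) (by positivity) (by positivity)
    (by positivity) (le_of_eq (by field_simp))
  have hww : |w.2 w.1| ≤ s ^ 2 := calc
    |w.2 w.1| ≤ ‖w.2‖ * ‖w.1‖ := w.2.le_opNorm w.1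
    _ ≤ s / θ * (θ * s) := by gcongr
    _ = s ^ 2 := by field_simp
  refine ⟨z + (1 / 2 : ℝ) • w, ?_, ?_, ?_⟩
  · have hmid := le_combo_of_convex_epigraph hconv hz hw (a := 1 / 2) (b := 1 / 2)
      (by norm_num) (by norm_num) (by norm_num)
    rw [show (1 / 2 : ℝ) • z + (1 / 2 : ℝ) • (z + w) = z + (1 / 2 : ℝ) • w by module] at hmid
    refine hmid.trans (EReal.coe_le_coe_iff.2 ?_)
    rw [coup_add]
    simp only [coup, Prod.smul_fst, Prod.smul_snd, map_smul, smul_apply, smul_eq_mul]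
    linarith [(abs_le.1 hww).1]
  · simp only [Prod.fst_add, Prod.smul_fst, add_sub_cancel_left, norm_smul,
      Real.norm_of_nonneg (by norm_num : (0 : ℝ) ≤ 1 / 2)]
    linarith
  · simp only [Prod.snd_add, Prod.smul_snd, add_sub_cancel_left, norm_smul,
      Real.norm_of_nonneg (by norm_num : (0 : ℝ) ≤ 1 / 2)]
    linarith

theorem continuous_coup : Continuous (coup X) := by
  unfold coup
  fun_prop

theorem exists_mem_Mset_near [CompleteSpace X]
    (hconv : Convex ℝ {p : (X × StrongDual ℝ X) × ℝ | f p.1 ≤ (p.2 : EReal)})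
    (hge : ∀ z, ((coup X z : ℝ) : EReal) ≤ f z)
    (hgeS : ∀ p, ((coupS X p : ℝ) : EReal) ≤ conjF X f p)
    (hlsc : LowerSemicontinuous f)
    {θ s : ℝ} (hθ : 0 < θ) (hs : 0 < s) {z₀ : X × StrongDual ℝ X}
    (hz₀ : f z₀ ≤ ((coup X z₀ + s ^ 2 : ℝ) : EReal)) :
    ∃ z ∈ Mset X f, ‖z.1 - z₀.1‖ ≤ 5 * θ * s ∧ ‖z.2 - z₀.2‖ ≤ 5 * s / θ := by
  have hstep : ∀ (z : X × StrongDual ℝ X) (n : ℕ), ∃ z' : X × StrongDual ℝ X,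
      f z ≤ ((coup X z + (s * (9 / 10) ^ n) ^ 2 : ℝ) : EReal) →
        f z' ≤ ((coup X z' + (9 / 10 * (s * (9 / 10) ^ n)) ^ 2 : ℝ) : EReal) ∧
        ‖z'.1 - z.1‖ ≤ θ * (s * (9 / 10) ^ n) / 2 ∧
        ‖z'.2 - z.2‖ ≤ s * (9 / 10) ^ n / θ / 2 := fun z n => by
    by_cases hz : f z ≤ ((coup X z + (s * (9 / 10) ^ n) ^ 2 : ℝ) : EReal)
    · exact (exists_nearby_le_coup_add_sq hconv hgeS hθ (by positivity) hz).imp fun _ h _ => h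
    · exact ⟨z, fun h => absurd h hz⟩
  choose next hnext using hstep
  let seq : ℕ → X × StrongDual ℝ X := fun n => Nat.rec z₀ (fun k z => next z k) n
  have hseq : ∀ n, f (seq n) ≤ ((coup X (seq n) + (s * (9 / 10) ^ n) ^ 2 : ℝ) : EReal) := by
    intro n
    induction n with
    | zero => simpa [seq] using hz₀
    | succ n ih =>
      convert (hnext (seq n) n ih).1 using 4
      ring
  have hdist₁ : ∀ n, dist (seq n).1 (seq (n + 1)).1 ≤ θ * s / 2 * (9 / 10) ^ n := fun n => by
    rw [dist_comm, dist_eq_norm]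
    linarith [(hnext (seq n) n (hseq n)).2.1]
  have hdist₂ : ∀ n, dist (seq n).2 (seq (n + 1)).2 ≤ s / θ / 2 * (9 / 10) ^ n := fun n => by
    rw [dist_comm, dist_eq_norm]
    convert (hnext (seq n) n (hseq n)).2.2 using 1
    ring
  obtain ⟨x, hx, hx₀⟩ := exists_tendsto_dist_le_of_le_geometric (by norm_num) hdist₁
  obtain ⟨y, hy, hy₀⟩ := exists_tendsto_dist_le_of_le_geometric (by norm_num) hdist₂
  have hgap : Tendsto (fun n => s * (9 / 10 : ℝ) ^ n) atTop (𝓝 0) := by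
    simpa using (tendsto_pow_atTop_nhds_zero_of_lt_one (by norm_num) (by norm_num)).const_mul s
  have hbound : Tendsto (fun n => ((coup X (seq n) + (s * (9 / 10) ^ n) ^ 2 : ℝ) : EReal)) atTop
      (𝓝 (coup X (x, y) : EReal)) := by
    have : Tendsto (fun n => coup X (seq n) + (s * (9 / 10) ^ n) ^ 2) atTop
        (𝓝 (coup X (x, y))) := by
      simpa using ((continuous_coup.tendsto _).comp (hx.prodMk_nhds hy)).add (hgap.pow 2)
    exact (continuous_coe_real_ereal.tendsto _).comp this
  refine ⟨(x, y), le_antisymm ?_ (hge _), ?_, ?_⟩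
  · exact hlsc.isClosed_epigraph.mem_of_tendsto ((hx.prodMk_nhds hy).prodMk_nhds hbound)
      (Eventually.of_forall hseq)
  · rw [← dist_eq_norm, dist_comm]
    exact hx₀.trans_eq (by ring)
  · rw [← dist_eq_norm, dist_comm]
    exact hy₀.trans_eq (by ring)

theorem exists_pos_le_coup_add_sq {z : X × StrongDual ℝ X} (hz : f z ≠ ⊤) :
    ∃ s > 0, f z ≤ ((coup X z + s ^ 2 : ℝ) : EReal) := by
  obtain ⟨t, ht, -⟩ := EReal.lt_iff_exists_real_btwn.1 (lt_top_iff_ne_top.2 hz)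
  refine ⟨|t - coup X z| + 1, by positivity, ht.le.trans (EReal.coe_le_coe_iff.2 ?_)⟩
  nlinarith [le_abs_self (t - coup X z), abs_nonneg (t - coup X z)]

theorem mem_closure_image_Mset_of_ne_top [CompleteSpace X]
    (hconv : Convex ℝ {p : (X × StrongDual ℝ X) × ℝ | f p.1 ≤ (p.2 : EReal)})
    (hge : ∀ z, ((coup X z : ℝ) : EReal) ≤ f z)
    (hgeS : ∀ p, ((coupS X p : ℝ) : EReal) ≤ conjF X f p)
    (hlsc : LowerSemicontinuous f) {z : X × StrongDual ℝ X} (hz : f z ≠ ⊤) :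
    z.1 ∈ closure (Prod.fst '' Mset X f) ∧ z.2 ∈ closure (Prod.snd '' Mset X f) := by
  obtain ⟨s, hs, hzs⟩ := exists_pos_le_coup_add_sq hz
  refine ⟨Metric.mem_closure_iff.2 fun ε hε => ?_, Metric.mem_closure_iff.2 fun ε hε => ?_⟩
  · obtain ⟨z', hz', hz'₁, -⟩ :=
      exists_mem_Mset_near hconv hge hgeS hlsc (θ := ε / (10 * s)) (by positivity) hs hzs
    refine ⟨z'.1, Set.mem_image_of_mem _ hz', ?_⟩
    rw [dist_comm, dist_eq_norm]
    calc ‖z'.1 - z.1‖ ≤ 5 * (ε / (10 * s)) * s := hz'₁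
      _ < ε := by field_simp; linarith
  · obtain ⟨z', hz', -, hz'₂⟩ :=
      exists_mem_Mset_near hconv hge hgeS hlsc (θ := 10 * s / ε) (by positivity) hs hzs
    refine ⟨z'.2, Set.mem_image_of_mem _ hz', ?_⟩
    rw [dist_comm, dist_eq_norm]
    calc ‖z'.2 - z.2‖ ≤ 5 * s / (10 * s / ε) := hz'₂
      _ < ε := by field_simp; linarith

end

theorem stmt8_general {X : Type*} [NormedAddCommGroup X] [NormedSpace ℝ X] [CompleteSpace X]
    (f : X × StrongDual ℝ X → EReal)
    (hconv : Convex ℝ {p : (X × StrongDual ℝ X) × ℝ | f p.1 ≤ (p.2 : EReal)})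
    (hge : ∀ z, ((coup X z : ℝ) : EReal) ≤ f z)
    (hgeS : ∀ p, ((coupS X p : ℝ) : EReal) ≤ conjF X f p)
    (hlsc : LowerSemicontinuous f) :
    closure (Prod.fst '' Mset X f) = closure (Prod.fst '' {z | f z ≠ ⊤}) ∧
    closure (Prod.snd '' Mset X f) = closure (Prod.snd '' {z | f z ≠ ⊤}) ∧
    Convex ℝ (closure (Prod.fst '' Mset X f)) ∧
    Convex ℝ (closure (Prod.snd '' Mset X f)) := by
  have hM : Mset X f ⊆ {z | f z ≠ ⊤} := fun z (hz : f z = _) =>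
    show f z ≠ ⊤ from hz ▸ EReal.coe_ne_top _
  have hdom := fun z hz => mem_closure_image_Mset_of_ne_top hconv hge hgeS hlsc (z := z) hz
  have h₁ : closure (Prod.fst '' Mset X f) = closure (Prod.fst '' {z | f z ≠ ⊤}) :=
    (closure_mono (Set.image_mono hM)).antisymm <| closure_minimal
      (Set.image_subset_iff.2 fun z hz => (hdom z hz).1) isClosed_closure
  have h₂ : closure (Prod.snd '' Mset X f) = closure (Prod.snd '' {z | f z ≠ ⊤}) :=
    (closure_mono (Set.image_mono hM)).antisymm <| closure_minimal
      (Set.image_subset_iff.2 fun z hz => (hdom z hz).2) isClosed_closure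
  have hconv_dom := convex_dom_of_convex_epigraph hconv
  refine ⟨h₁, h₂, ?_, ?_⟩
  · rw [h₁]
    exact (hconv_dom.linear_image (LinearMap.fst ℝ X (StrongDual ℝ X))).closure
  · rw [h₂]
    exact (hconv_dom.linear_image (LinearMap.snd ℝ X (StrongDual ℝ X))).closure

/-- for `f ∈ G_s(Z)`, `cl(dom M_f) = cl(Pr_X(dom f))` and
`cl(Im M_f) = cl(Pr_{X*}(dom f))` (norm closures); in particular both closures are convex. -/
theorem stmt8 {X : Type*} [NormedAddCommGroup X] [NormedSpace ℝ X] [CompleteSpace X]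
    (f : X × StrongDual ℝ X → EReal)
    (hne_bot : ∀ z, f z ≠ ⊥) (hproper : ∃ z, f z ≠ ⊤)
    (hconv : Convex ℝ {p : (X × StrongDual ℝ X) × ℝ | f p.1 ≤ (p.2 : EReal)})
    (hge : ∀ z, ((coup X z : ℝ) : EReal) ≤ f z)
    (hgeS : ∀ p, ((coupS X p : ℝ) : EReal) ≤ conjF X f p)
    (hlsc : LowerSemicontinuous f) :
    closure (Prod.fst '' Mset X f) = closure (Prod.fst '' {z | f z ≠ ⊤}) ∧
    closure (Prod.snd '' Mset X f) = closure (Prod.snd '' {z | f z ≠ ⊤}) ∧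
    Convex ℝ (closure (Prod.fst '' Mset X f)) ∧
    Convex ℝ (closure (Prod.snd '' Mset X f)) :=
  stmt8_general f hconv hge hgeS hlsc
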